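/- Let n ≥ 1, let A be an IFM of order n, let λ ∈ [0,1] and let p ≥ 1 be a real number. Then for every m ≥ 2 and all r, s, the consecutive maxgeneralized mean–mingeneralized mean powers of A satisfy |(A^m)μ r s − (A^(m−1))μ r s| ≤ λ^((m−2)/p) and |(A^m)ν r s − (A^(m−1))ν r s| ≤ λ^((m−2)/p). -/

import Mathlib

open Filter Topology

/-- `A` (given by membership part `Amu` and non-membership part `Anu`) is an
intuitionistic fuzzy matrix. -/
def IsIFM (n : ℕ) (Amu Anu : Fin n → Fin n → ℝ) : Prop :=
  ∀ i j, 0 ≤ Amu i j ∧ 0 ≤ Anu i j ∧ Amu i j + Anu i j ≤ 1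

/-- Powers of an IFM under the maxgeneralized mean–mingeneralized mean operation
with parameters `lam` and exponent `p`:
`A^1 = A` and `A^(k+1) = A^k ∘ A`, where
`(X ∘ A)μ i j = max_t (lam·(Xμ i t)^p + (1-lam)·(Aμ t j)^p)^(1/p)` and
`(X ∘ A)ν i j = min_t (lam·(Xν i t)^p + (1-lam)·(Aν t j)^p)^(1/p)`.
(The value at `0` is irrelevant; it is set to `A`.) -/
noncomputable def gmPow (n : ℕ) (lam p : ℝ) (Amu Anu : Fin n → Fin n → ℝ) :
    ℕ → (Fin n → Fin n → ℝ) × (Fin n → Fin n → ℝ)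
  | 0 => (Amu, Anu)
  | 1 => (Amu, Anu)
  | m + 2 =>
    let X := gmPow n lam p Amu Anu (m + 1)
    (fun i j => ⨆ t : Fin n, (lam * X.1 i t ^ p + (1 - lam) * Amu t j ^ p) ^ (1 / p),
     fun i j => ⨅ t : Fin n, (lam * X.2 i t ^ p + (1 - lam) * Anu t j ^ p) ^ (1 / p))

open Set

/-! Every power has entries in `[0, 1]`. For `p ≥ 1`, Minkowski's inequality makes
`x ↦ (λ x^p + a)^(1/p)` a `λ^(1/p)`-Lipschitz map on `[0, ∞)`, and a maximum or minimum over a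
finite index set is `1`-Lipschitz for the sup distance. Hence the entrywise distance between
consecutive powers shrinks by the factor `λ^(1/p)` at each step, starting from the trivial
bound `1` between `A²` and `A`. -/

noncomputable def gmean (lam p x y : ℝ) : ℝ :=
  (lam * x ^ p + (1 - lam) * y ^ p) ^ (1 / p)

section GeneralizedMean

variable {p : ℝ}

theorem rpow_add_rpow_one_div_le_add_abs_sub (hp : 1 ≤ p) {x y c : ℝ} (hx : 0 ≤ x)
    (hy : 0 ≤ y) (hc : 0 ≤ c) :
    (x ^ p + c ^ p) ^ (1 / p) ≤ (y ^ p + c ^ p) ^ (1 / p) + |x - y| := by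
  have hp0 : p ≠ 0 := by positivity
  have hxy : x ≤ y + |x - y| := by linarith [le_abs_self (x - y)]
  have minkowski := Real.Lp_add_le_of_nonneg (s := Finset.univ) (f := ![y, c])
    (g := ![|x - y|, 0]) hp (by simp [Fin.forall_fin_two, hy, hc]) (by simp [Fin.forall_fin_two])
  simp only [Fin.sum_univ_two, Matrix.cons_val_zero, Matrix.cons_val_one,
    add_zero, Real.zero_rpow hp0, one_div, Real.rpow_rpow_inv (abs_nonneg _) hp0] at minkowski
  calc (x ^ p + c ^ p) ^ (1 / p) ≤ ((y + |x - y|) ^ p + c ^ p) ^ (1 / p) := by gcongr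
    _ ≤ (y ^ p + c ^ p) ^ (1 / p) + |x - y| := by simpa only [one_div] using minkowski

theorem abs_rpow_add_rpow_one_div_sub_le (hp : 1 ≤ p) {x y c : ℝ} (hx : 0 ≤ x)
    (hy : 0 ≤ y) (hc : 0 ≤ c) :
    |(x ^ p + c ^ p) ^ (1 / p) - (y ^ p + c ^ p) ^ (1 / p)| ≤ |x - y| := by
  rw [abs_sub_le_iff, sub_le_iff_le_add', sub_le_iff_le_add']
  refine ⟨rpow_add_rpow_one_div_le_add_abs_sub hp hx hy hc,
    abs_sub_comm x y ▸ rpow_add_rpow_one_div_le_add_abs_sub hp hy hx hc⟩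

variable {lam : ℝ}

theorem gmean_mem_Icc (hlam : lam ∈ Icc (0 : ℝ) 1) (hp : 0 ≤ p) {x y : ℝ}
    (hx : x ∈ Icc (0 : ℝ) 1) (hy : y ∈ Icc (0 : ℝ) 1) : gmean lam p x y ∈ Icc (0 : ℝ) 1 := by
  obtain ⟨hlam0, hlam1⟩ := hlam
  have hxp : x ^ p ∈ Icc (0 : ℝ) 1 := ⟨Real.rpow_nonneg hx.1 p, Real.rpow_le_one hx.1 hx.2 hp⟩
  have hyp : y ^ p ∈ Icc (0 : ℝ) 1 := ⟨Real.rpow_nonneg hy.1 p, Real.rpow_le_one hy.1 hy.2 hp⟩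
  have hmean : lam * x ^ p + (1 - lam) * y ^ p ∈ Icc (0 : ℝ) 1 := by
    constructor <;> nlinarith [hxp.1, hxp.2, hyp.1, hyp.2]
  exact ⟨Real.rpow_nonneg hmean.1 _, Real.rpow_le_one hmean.1 hmean.2 (by positivity)⟩

theorem abs_gmean_sub_gmean_le (hlam : lam ∈ Icc (0 : ℝ) 1) (hp : 1 ≤ p) {x y a : ℝ}
    (hx : 0 ≤ x) (hy : 0 ≤ y) (ha : 0 ≤ a) :
    |gmean lam p x a - gmean lam p y a| ≤ lam ^ (1 / p) * |x - y| := by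
  have hp0 : p ≠ 0 := by positivity
  have hlam' : 0 ≤ 1 - lam := sub_nonneg.2 hlam.2
  have weight : ∀ {w z : ℝ}, 0 ≤ w → 0 ≤ z → w * z ^ p = (w ^ (1 / p) * z) ^ p := fun hw hz => by
    rw [Real.mul_rpow (by positivity) hz, one_div, Real.rpow_inv_rpow hw hp0]
  have h := abs_rpow_add_rpow_one_div_sub_le hp (mul_nonneg (Real.rpow_nonneg hlam.1 (1 / p)) hx)
    (mul_nonneg (Real.rpow_nonneg hlam.1 (1 / p)) hy)
    (mul_nonneg (Real.rpow_nonneg hlam' (1 / p)) ha)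
  rwa [← mul_sub, abs_mul, abs_of_nonneg (Real.rpow_nonneg hlam.1 _), ← weight hlam.1 hx,
    ← weight hlam.1 hy, ← weight hlam' ha] at h

end GeneralizedMean

section FiniteSupInf

variable {ι : Type*} [Finite ι] [Nonempty ι] {f g : ι → ℝ} {ε : ℝ}

theorem ciSup_sub_ciSup_le (h : ∀ i, f i - g i ≤ ε) : (⨆ i, f i) - ⨆ i, g i ≤ ε := by
  rw [sub_le_iff_le_add]
  exact ciSup_le fun i => by linarith [h i, le_ciSup (Finite.bddAbove_range g) i]

theorem ciInf_sub_ciInf_le (h : ∀ i, f i - g i ≤ ε) : (⨅ i, f i) - ⨅ i, g i ≤ ε := by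
  rw [sub_le_comm]
  exact le_ciInf fun i => by linarith [h i, ciInf_le (Finite.bddBelow_range f) i]

theorem abs_ciSup_sub_ciSup_le (h : ∀ i, |f i - g i| ≤ ε) : |(⨆ i, f i) - ⨆ i, g i| ≤ ε :=
  abs_sub_le_iff.2 ⟨ciSup_sub_ciSup_le fun i => (abs_sub_le_iff.1 (h i)).1,
    ciSup_sub_ciSup_le fun i => (abs_sub_le_iff.1 (h i)).2⟩

theorem abs_ciInf_sub_ciInf_le (h : ∀ i, |f i - g i| ≤ ε) : |(⨅ i, f i) - ⨅ i, g i| ≤ ε :=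
  abs_sub_le_iff.2 ⟨ciInf_sub_ciInf_le fun i => (abs_sub_le_iff.1 (h i)).1,
    ciInf_sub_ciInf_le fun i => (abs_sub_le_iff.1 (h i)).2⟩

end FiniteSupInf

section gmPow

variable {n : ℕ} {lam p : ℝ} {Amu Anu : Fin n → Fin n → ℝ}

theorem gmPow_fst_add_two (m : ℕ) (i j : Fin n) :
    (gmPow n lam p Amu Anu (m + 2)).1 i j =
      ⨆ t, gmean lam p ((gmPow n lam p Amu Anu (m + 1)).1 i t) (Amu t j) := rfl

theorem gmPow_snd_add_two (m : ℕ) (i j : Fin n) :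
    (gmPow n lam p Amu Anu (m + 2)).2 i j =
      ⨅ t, gmean lam p ((gmPow n lam p Amu Anu (m + 1)).2 i t) (Anu t j) := rfl

theorem IsIFM.mem_Icc (hA : IsIFM n Amu Anu) (i j : Fin n) :
    Amu i j ∈ Icc (0 : ℝ) 1 ∧ Anu i j ∈ Icc (0 : ℝ) 1 := by
  obtain ⟨hmu, hnu, hsum⟩ := hA i j
  exact ⟨⟨hmu, by linarith⟩, ⟨hnu, by linarith⟩⟩

theorem gmPow_mem_Icc (hA : IsIFM n Amu Anu) (hlam : lam ∈ Icc (0 : ℝ) 1) (hp : 0 ≤ p) :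
    ∀ m i j, (gmPow n lam p Amu Anu m).1 i j ∈ Icc (0 : ℝ) 1 ∧
      (gmPow n lam p Amu Anu m).2 i j ∈ Icc (0 : ℝ) 1
  | 0, i, j | 1, i, j => hA.mem_Icc i j
  | m + 2, i, j => by
    have ih := gmPow_mem_Icc hA hlam hp (m + 1) i
    have hmean : ∀ t, gmean lam p ((gmPow n lam p Amu Anu (m + 1)).1 i t) (Amu t j) ∈ Icc 0 1 ∧
        gmean lam p ((gmPow n lam p Amu Anu (m + 1)).2 i t) (Anu t j) ∈ Icc 0 1 := fun t =>
      ⟨gmean_mem_Icc hlam hp (ih t).1 (hA.mem_Icc t j).1,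
        gmean_mem_Icc hlam hp (ih t).2 (hA.mem_Icc t j).2⟩
    rw [gmPow_fst_add_two, gmPow_snd_add_two]
    exact ⟨⟨Real.iSup_nonneg fun t => (hmean t).1.1,
        Real.iSup_le (fun t => (hmean t).1.2) zero_le_one⟩,
      ⟨Real.iInf_nonneg fun t => (hmean t).2.1,
        ciInf_le_of_le (Finite.bddBelow_range _) i (hmean i).2.2⟩⟩

theorem abs_gmPow_add_two_sub_le (hA : IsIFM n Amu Anu) (hlam : lam ∈ Icc (0 : ℝ) 1)
    (hp : 1 ≤ p) (k : ℕ) (r s : Fin n) :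
    |(gmPow n lam p Amu Anu (k + 2)).1 r s - (gmPow n lam p Amu Anu (k + 1)).1 r s| ≤
        lam ^ ((k : ℝ) / p) ∧
      |(gmPow n lam p Amu Anu (k + 2)).2 r s - (gmPow n lam p Amu Anu (k + 1)).2 r s| ≤
        lam ^ ((k : ℝ) / p) := by
  have : Nonempty (Fin n) := ⟨r⟩
  have mem := gmPow_mem_Icc hA hlam (zero_le_one.trans hp)
  induction k generalizing r s with
  | zero =>
    simp only [CharP.cast_eq_zero, zero_div, Real.rpow_zero]
    obtain ⟨⟨a0, a1⟩, b0, b1⟩ := mem 2 r s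
    obtain ⟨⟨c0, c1⟩, d0, d1⟩ := mem 1 r s
    exact ⟨abs_sub_le_of_nonneg_of_le a0 a1 c0 c1, abs_sub_le_of_nonneg_of_le b0 b1 d0 d1⟩
  | succ k ih =>
    have hpow : lam ^ (1 / p) * lam ^ ((k : ℝ) / p) = lam ^ (((k + 1 : ℕ) : ℝ) / p) := by
      rw [← Real.rpow_add' hlam.1 (by positivity)]
      push_cast
      ring_nf
    rw [gmPow_fst_add_two (k + 1), gmPow_fst_add_two k, gmPow_snd_add_two (k + 1),
      gmPow_snd_add_two k, ← hpow]
    have hlam_root : 0 ≤ lam ^ (1 / p) := Real.rpow_nonneg hlam.1 _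
    constructor
    · refine abs_ciSup_sub_ciSup_le fun t => ?_
      exact (abs_gmean_sub_gmean_le hlam hp (mem _ r t).1.1 (mem _ r t).1.1
        (hA.mem_Icc t s).1.1).trans (mul_le_mul_of_nonneg_left (ih r t).1 hlam_root)
    · refine abs_ciInf_sub_ciInf_le fun t => ?_
      exact (abs_gmean_sub_gmean_le hlam hp (mem _ r t).2.1 (mem _ r t).2.1
        (hA.mem_Icc t s).2.1).trans (mul_le_mul_of_nonneg_left (ih r t).2 hlam_root)

end gmPow

theorem gmPow_consecutive_close (n : ℕ) (Amu Anu : Fin n → Fin n → ℝ)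
    (hA : IsIFM n Amu Anu) (lam p : ℝ) (hlam : lam ∈ Set.Icc (0 : ℝ) 1) (hp : 1 ≤ p)
    (m : ℕ) (hm : 2 ≤ m) (r s : Fin n) :
    |(gmPow n lam p Amu Anu m).1 r s - (gmPow n lam p Amu Anu (m - 1)).1 r s| ≤
        lam ^ (((m : ℝ) - 2) / p) ∧
      |(gmPow n lam p Amu Anu m).2 r s - (gmPow n lam p Amu Anu (m - 1)).2 r s| ≤
        lam ^ (((m : ℝ) - 2) / p) := by
  obtain ⟨k, rfl⟩ := Nat.exists_eq_add_of_le' hm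
  have hexp : ((k + 2 : ℕ) : ℝ) - 2 = k := by push_cast; ring
  rw [show k + 2 - 1 = k + 1 from rfl, hexp]
  exact abs_gmPow_add_two_sub_le hA hlam hp k r s
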